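/- Let (Ω, Σ, μ) be an atomless finite measure space, 1 ≤ p < ∞, T a narrow bounded operator on L_p(μ), and x, y simple functions with Tx = y. Then for each dyadic rational λ = j/2^n with j ∈ {1, ..., 2^n - 1} and each ε > 0 there exists a partition Ω = A ⊔ B with ‖x·1_A‖^p = λ‖x‖^p, ‖y·1_B‖^p = (1-λ)‖y‖^p, and ‖T(x·1_A) - λy‖ < ε. -/

import Mathlib

open MeasureTheory

variable {Ω : Type*} [MeasurableSpace Ω] {μ : Measure Ω} {pe : ENNReal} [Fact (1 ≤ pe)]

/-- An operator `T` on `L_p(μ)` is narrow if for every measurable `A` and `ε > 0` there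
is `x ∈ L_p(μ)` with `x² = 1_A`, `∫ x dμ = 0` and `‖Tx‖ < ε`. -/
def IsNarrow (μ : Measure Ω) (pe : ENNReal) [Fact (1 ≤ pe)]
    (T : Lp ℝ pe μ →L[ℝ] Lp ℝ pe μ) : Prop :=
  ∀ A : Set Ω, MeasurableSet A → ∀ ε : ℝ, 0 < ε →
    ∃ x : Lp ℝ pe μ, (∀ᵐ ω ∂μ, (x ω) ^ 2 = A.indicator (fun _ => (1 : ℝ)) ω) ∧
      (∫ ω, x ω ∂μ) = 0 ∧ ‖T x‖ < ε

/-- The restriction `x·1_A` of `x ∈ L_p(μ)` to a measurable set `A`. -/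
noncomputable def lpRestrict (x : Lp ℝ pe μ) {A : Set Ω} (hA : MeasurableSet A) :
    Lp ℝ pe μ :=
  MemLp.toLp (A.indicator x) ((Lp.memLp x).indicator hA)

/-! Narrowness applied to a set `D` on which `x` and `y` are constant gives `u = ±1` on `D` with
mean zero and `‖T u‖` small. Then `E = D ∩ {u = 1}` has exactly half the measure of `D`, and
`x 1_E - x 1_D / 2 = (a / 2) u` where `a` is the value of `x` on `D`. Doing this on every level set
of the pair `(x, y)` inside a set `B` halves `B` in every fibre of `(x, y)` — hence in the
`p`-masses of `x` and `y` — while `T (x 1_E)` stays close to `T (x 1_B) / 2`. Starting from `∅` and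
`Ω`, the steps `λ ↦ λ / 2` (halve `A`) and `λ ↦ (1 + λ) / 2` (add half of `Aᶜ` to `A`) reach every
dyadic `λ = j / 2ⁿ`. -/

theorem two_mul_indicator_inter_preimage_one {α : Type*} {D : Set α} {u f : α → ℝ} {a : α}
    (hu : u a ^ 2 = D.indicator (fun _ => (1 : ℝ)) a) :
    2 * (D ∩ u ⁻¹' {1}).indicator f a = D.indicator f a + u a * f a := by
  by_cases ha : a ∈ D
  · obtain h | h : u a = 1 ∨ u a = -1 := by simpa [ha] using hu
    · simp [ha, h]; ring
    · norm_num [ha, h]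
  · have : u a = 0 := by simpa [ha] using hu
    simp [ha, this]

namespace MeasureTheory.SimpleFunc

variable {α σ : Type*} [MeasurableSpace α]

theorem biUnion_range_inter_fiber (s : SimpleFunc α σ) (A : Set α) :
    ⋃ v ∈ s.range, A ∩ s ⁻¹' {v} = A := by
  ext a
  simp

theorem pairwiseDisjoint_inter_fiber (s : SimpleFunc α σ) (A : Set α) :
    (s.range : Set σ).PairwiseDisjoint fun v => A ∩ s ⁻¹' {v} :=
  (Set.pairwiseDisjoint_fiber s _).mono fun _ => Set.inter_subset_right

theorem setIntegral_comp_eq_sum {μ : Measure α} [IsFiniteMeasure μ] (s : SimpleFunc α σ)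
    (ψ : σ → ℝ) {A : Set α} (hA : MeasurableSet A) :
    ∫ a in A, ψ (s a) ∂μ = ∑ v ∈ s.range, μ.real (A ∩ s ⁻¹' {v}) * ψ v := by
  have hcell (v : σ) : MeasurableSet (A ∩ s ⁻¹' {v}) := hA.inter (s.measurableSet_fiber v)
  conv_lhs => rw [← s.biUnion_range_inter_fiber A]
  rw [integral_biUnion_finset (f := fun a => ψ (s a)) _ (fun v _ => hcell v)
    (s.pairwiseDisjoint_inter_fiber A)
    fun v _ => (s.map ψ).integrable_of_isFiniteMeasure.integrableOn]
  refine Finset.sum_congr rfl fun v _ => ?_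
  rw [setIntegral_congr_fun (hcell v) (g := fun _ => ψ v) fun a ha => congrArg ψ ha.2,
    setIntegral_const, smul_eq_mul]

theorem setIntegral_comp_eq_mul {μ : Measure α} [IsFiniteMeasure μ] (s : SimpleFunc α σ)
    (ψ : σ → ℝ) {A : Set α} (hA : MeasurableSet A) {c : ℝ}
    (h : ∀ v, μ.real (A ∩ s ⁻¹' {v}) = c * μ.real (s ⁻¹' {v})) :
    ∫ a in A, ψ (s a) ∂μ = c * ∫ a, ψ (s a) ∂μ := by
  conv_rhs => rw [← setIntegral_univ]
  rw [s.setIntegral_comp_eq_sum ψ hA, s.setIntegral_comp_eq_sum ψ .univ, Finset.mul_sum]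
  simp only [h, Set.univ_inter, mul_assoc]

end MeasureTheory.SimpleFunc

theorem measureReal_compl_inter_eq [IsFiniteMeasure μ] {A F : Set Ω} (hA : MeasurableSet A)
    {c : ℝ} (h : μ.real (A ∩ F) = c * μ.real F) : μ.real (Aᶜ ∩ F) = (1 - c) * μ.real F := by
  have := measureReal_inter_add_sdiff (μ := μ) (s := F) hA
  rw [← Set.sdiff_eq_compl_inter]
  rw [Set.inter_comm] at h
  linarith

section lpRestrict

omit [Fact (1 ≤ pe)]

variable (x : Lp ℝ pe μ)

theorem coeFn_lpRestrict {A : Set Ω} (hA : MeasurableSet A) :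
    (lpRestrict x hA : Ω → ℝ) =ᵐ[μ] A.indicator x :=
  MemLp.coeFn_toLp _

theorem lpRestrict_congr {A B : Set Ω} (hA : MeasurableSet A) (hB : MeasurableSet B)
    (h : A = B) : lpRestrict x hA = lpRestrict x hB := by
  subst h; rfl

theorem lpRestrict_empty : lpRestrict x (.empty : MeasurableSet (∅ : Set Ω)) = 0 := by
  refine Lp.ext ?_
  filter_upwards [coeFn_lpRestrict x .empty, Lp.coeFn_zero ℝ pe μ] with ω h h0
  rw [h, h0]
  simp

theorem lpRestrict_univ : lpRestrict x (.univ : MeasurableSet (Set.univ : Set Ω)) = x := by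
  refine Lp.ext ?_
  filter_upwards [coeFn_lpRestrict x .univ] with ω h
  simp [h]

theorem lpRestrict_compl {A : Set Ω} (hA : MeasurableSet A) :
    lpRestrict x hA.compl = x - lpRestrict x hA := by
  refine Lp.ext ?_
  filter_upwards [coeFn_lpRestrict x hA.compl, coeFn_lpRestrict x hA,
    Lp.coeFn_sub x (lpRestrict x hA)] with ω hc h hsub
  rw [hc, hsub, Pi.sub_apply, h, Set.indicator_compl, Pi.sub_apply]

theorem lpRestrict_union {A B : Set Ω} (hA : MeasurableSet A) (hB : MeasurableSet B)
    (hAB : Disjoint A B) :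
    lpRestrict x (hA.union hB) = lpRestrict x hA + lpRestrict x hB := by
  refine Lp.ext ?_
  filter_upwards [coeFn_lpRestrict x (hA.union hB), coeFn_lpRestrict x hA,
    coeFn_lpRestrict x hB, Lp.coeFn_add (lpRestrict x hA) (lpRestrict x hB)]
    with ω hu hA' hB' hadd
  rw [hu, hadd, Pi.add_apply, hA', hB', Set.indicator_union_of_disjoint hAB]

theorem lpRestrict_biUnion {ι : Type*} (t : Finset ι) {S : ι → Set Ω}
    (hS : ∀ i, MeasurableSet (S i)) (hd : (t : Set ι).PairwiseDisjoint S) :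
    lpRestrict x (.biUnion t.countable_toSet fun i _ => hS i) =
      ∑ i ∈ t, lpRestrict x (hS i) := by
  refine Lp.ext ?_
  filter_upwards [coeFn_lpRestrict x (.biUnion t.countable_toSet fun i _ => hS i),
    Lp.coeFn_fun_finsetSum t fun i => lpRestrict x (hS i),
    (Filter.eventually_all_finset t).2 fun i _ => coeFn_lpRestrict x (hS i)] with ω h hsum hi
  rw [h, hsum, Finset.set_biUnion_coe, Finset.indicator_biUnion_apply t S hd]
  exact Finset.sum_congr rfl fun i hit => (hi i hit).symm

end lpRestrict

section norm

variable (x : Lp ℝ pe μ)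

theorem norm_rpow_eq_integral (hpe : pe ≠ ⊤) :
    ‖x‖ ^ pe.toReal = ∫ ω, |x ω| ^ pe.toReal ∂μ := by
  have hpe0 : pe ≠ 0 := (zero_lt_one.trans_le Fact.out).ne'
  have hq : 0 < pe.toReal := ENNReal.toReal_pos hpe0 hpe
  rw [Lp.norm_def, (Lp.memLp x).eLpNorm_eq_integral_rpow_norm hpe0 hpe,
    ENNReal.toReal_ofReal (by positivity), ← Real.rpow_mul (by positivity),
    inv_mul_cancel₀ hq.ne', Real.rpow_one]
  simp only [Real.norm_eq_abs]

theorem norm_lpRestrict_rpow_eq_setIntegral (hpe : pe ≠ ⊤) {A : Set Ω} (hA : MeasurableSet A) :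
    ‖lpRestrict x hA‖ ^ pe.toReal = ∫ ω in A, |x ω| ^ pe.toReal ∂μ := by
  have hq : pe.toReal ≠ 0 := (ENNReal.toReal_pos (zero_lt_one.trans_le Fact.out).ne' hpe).ne'
  rw [norm_rpow_eq_integral _ hpe, ← integral_indicator hA]
  refine integral_congr_ae ?_
  filter_upwards [coeFn_lpRestrict x hA] with ω h
  by_cases hω : ω ∈ A <;> simp [h, hω, Real.zero_rpow hq]

theorem norm_lpRestrict_rpow_eq_mul [IsFiniteMeasure μ] {σ : Type*} (hpe : pe ≠ ⊤)
    (s : SimpleFunc Ω σ) (φ : σ → ℝ) (hx : x =ᵐ[μ] φ ∘ s) {A : Set Ω} (hA : MeasurableSet A)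
    {c : ℝ} (h : ∀ v, μ.real (A ∩ s ⁻¹' {v}) = c * μ.real (s ⁻¹' {v})) :
    ‖lpRestrict x hA‖ ^ pe.toReal = c * ‖x‖ ^ pe.toReal := by
  have hcongr : (fun ω => |x ω| ^ pe.toReal) =ᵐ[μ] fun ω => |φ (s ω)| ^ pe.toReal :=
    hx.fun_comp fun r => |r| ^ pe.toReal
  rw [norm_lpRestrict_rpow_eq_setIntegral _ hpe hA, norm_rpow_eq_integral _ hpe,
    integral_congr_ae (ae_restrict_of_ae hcongr), integral_congr_ae hcongr]
  exact s.setIntegral_comp_eq_mul (fun v => |φ v| ^ pe.toReal) hA h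

end norm

namespace IsNarrow

variable [IsFiniteMeasure μ] {T : Lp ℝ pe μ →L[ℝ] Lp ℝ pe μ}

theorem exists_half_subset_of_const_on (hT : IsNarrow μ pe T) (x : Lp ℝ pe μ) (a : ℝ) {D : Set Ω}
    (hD : MeasurableSet D) (hx : ∀ᵐ ω ∂μ, ω ∈ D → x ω = a) {δ : ℝ} (hδ : 0 < δ) :
    ∃ E ⊆ D, ∃ hE : MeasurableSet E, μ.real E = μ.real D / 2 ∧
      ‖T (lpRestrict x hE) - (2⁻¹ : ℝ) • T (lpRestrict x hD)‖ ≤ |a| * δ := by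
  obtain ⟨u, hu_sq, hu_mean, hTu⟩ := hT D hD δ hδ
  have hE : MeasurableSet (D ∩ u ⁻¹' {1}) :=
    hD.inter ((Lp.stronglyMeasurable u).measurable (measurableSet_singleton 1))
  have hμE : 2 * μ.real (D ∩ u ⁻¹' {1}) = μ.real D := by
    have h : ∫ ω, 2 * (D ∩ u ⁻¹' {1}).indicator 1 ω ∂μ = ∫ ω, (D.indicator 1 ω + u ω) ∂μ := by
      refine integral_congr_ae ?_
      filter_upwards [hu_sq] with ω h
      rw [two_mul_indicator_inter_preimage_one h, Pi.one_apply, mul_one]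
    have h1D : Integrable (D.indicator 1) μ := (integrable_const (1 : ℝ)).indicator hD
    rwa [integral_const_mul, integral_add h1D ((Lp.memLp u).integrable Fact.out), hu_mean,
      add_zero, integral_indicator_one hE, integral_indicator_one hD] at h
  have hxE : lpRestrict x hE - (2⁻¹ : ℝ) • lpRestrict x hD = (a / 2) • u := by
    refine Lp.ext ?_
    filter_upwards [hu_sq, hx, coeFn_lpRestrict x hE, coeFn_lpRestrict x hD,
      Lp.coeFn_sub (lpRestrict x hE) ((2⁻¹ : ℝ) • lpRestrict x hD),
      Lp.coeFn_smul (2⁻¹ : ℝ) (lpRestrict x hD), Lp.coeFn_smul (a / 2) u]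
      with ω h hxω hE' hD' hsub hsmul hsmul'
    have hux : u ω * x ω = a * u ω := by
      by_cases hω : ω ∈ D
      · rw [hxω hω, mul_comm]
      · simp [show u ω = 0 by simpa [hω] using h]
    have key := two_mul_indicator_inter_preimage_one (f := x) h
    rw [hsub, Pi.sub_apply, hsmul, Pi.smul_apply, hE', hD', hsmul', Pi.smul_apply, smul_eq_mul,
      smul_eq_mul]
    linarith
  refine ⟨_, Set.inter_subset_left, hE, by linarith, ?_⟩
  rw [← map_smul, ← map_sub, hxE, map_smul, norm_smul, Real.norm_eq_abs, abs_div, abs_two]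
  calc |a| / 2 * ‖T u‖ ≤ |a| / 2 * δ := by gcongr
    _ ≤ |a| * δ := by nlinarith [abs_nonneg a]

theorem exists_fiberwise_half_subset {σ : Type*} (hT : IsNarrow μ pe T) (x : Lp ℝ pe μ)
    (s : SimpleFunc Ω σ) (φ : σ → ℝ) (hx : x =ᵐ[μ] φ ∘ s) {B : Set Ω} (hB : MeasurableSet B)
    {ε : ℝ} (hε : 0 < ε) :
    ∃ E ⊆ B, ∃ hE : MeasurableSet E,
      (∀ v, μ.real (E ∩ s ⁻¹' {v}) = μ.real (B ∩ s ⁻¹' {v}) / 2) ∧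
      ‖T (lpRestrict x hE) - (2⁻¹ : ℝ) • T (lpRestrict x hB)‖ < ε := by
  set M := ∑ v ∈ s.range, |φ v|
  have hM : 0 ≤ M := Finset.sum_nonneg fun v _ => abs_nonneg (φ v)
  have hδ : 0 < ε / (M + 1) := by positivity
  have hcell (v : σ) : MeasurableSet (B ∩ s ⁻¹' {v}) := hB.inter (s.measurableSet_fiber v)
  choose E hEsub hE hμE hTE using fun v => hT.exists_half_subset_of_const_on x (φ v) (hcell v)
    (hx.mono fun ω hω hωv => by rw [hω, Function.comp_apply, hωv.2]) hδ
  have hEunion : MeasurableSet (⋃ v ∈ s.range, E v) :=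
    .biUnion s.range.countable_toSet fun v _ => hE v
  have hfiber (w : σ) : (⋃ v ∈ s.range, E v) ∩ s ⁻¹' {w} = E w := by
    ext ω
    simp only [Set.mem_inter_iff, Set.mem_iUnion, Set.mem_preimage, Set.mem_singleton_iff]
    constructor
    · rintro ⟨⟨v, -, hv⟩, rfl⟩
      rwa [(hEsub v hv).2]
    · intro hw
      have hsw : s ω = w := (hEsub w hw).2
      exact ⟨⟨w, hsw ▸ s.mem_range_self ω, hw⟩, hsw⟩
  refine ⟨_, Set.iUnion₂_subset fun v _ => (hEsub v).trans Set.inter_subset_left, hEunion,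
    fun w => by rw [hfiber, hμE], ?_⟩
  have hdisj : (s.range : Set σ).PairwiseDisjoint E :=
    (s.pairwiseDisjoint_inter_fiber B).mono fun v => hEsub v
  rw [lpRestrict_biUnion x s.range hE hdisj,
    lpRestrict_congr x hB (.biUnion s.range.countable_toSet fun v _ => hcell v)
      (s.biUnion_range_inter_fiber B).symm,
    lpRestrict_biUnion x s.range hcell (s.pairwiseDisjoint_inter_fiber B), map_sum, map_sum,
    Finset.smul_sum, ← Finset.sum_sub_distrib]
  calc _ ≤ ∑ v ∈ s.range, |φ v| * (ε / (M + 1)) :=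
        (norm_sum_le _ _).trans (Finset.sum_le_sum fun v _ => hTE v)
    _ = M * (ε / (M + 1)) := by rw [Finset.sum_mul]
    _ < ε := by
      rw [mul_div_assoc', div_lt_iff₀ (by positivity)]
      nlinarith

end IsNarrow

theorem norm_add_inv_two_smul_lt {E : Type*} [SeminormedAddCommGroup E] [NormedSpace ℝ E]
    {a b : E} {δ ε : ℝ} (ha : ‖a‖ < δ) (hb : ‖b‖ < ε) : ‖a + (2⁻¹ : ℝ) • b‖ < ε / 2 + δ :=
  calc ‖a + (2⁻¹ : ℝ) • b‖ ≤ ‖a‖ + 2⁻¹ * ‖b‖ := (norm_add_le _ _).trans_eq (by simp [norm_smul])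
    _ < ε / 2 + δ := by linarith

def IsApproxSplit {σ : Type*} (T : Lp ℝ pe μ →L[ℝ] Lp ℝ pe μ) (x : Lp ℝ pe μ)
    (s : SimpleFunc Ω σ) (lam ε : ℝ) (A : Set Ω) : Prop :=
  ∃ hA : MeasurableSet A, (∀ v, μ.real (A ∩ s ⁻¹' {v}) = lam * μ.real (s ⁻¹' {v})) ∧
    ‖T (lpRestrict x hA) - lam • T x‖ < ε

namespace IsApproxSplit

variable {σ : Type*} {T : Lp ℝ pe μ →L[ℝ] Lp ℝ pe μ} {x : Lp ℝ pe μ} {s : SimpleFunc Ω σ}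
  {lam ε : ℝ} {A : Set Ω}

theorem empty (hε : 0 < ε) : IsApproxSplit T x s 0 ε ∅ :=
  ⟨.empty, fun v => by simp, by simpa [lpRestrict_empty] using hε⟩

theorem univ (hε : 0 < ε) : IsApproxSplit T x s 1 ε Set.univ :=
  ⟨.univ, fun v => by simp, by simpa [lpRestrict_univ] using hε⟩

variable [IsFiniteMeasure μ] (h : IsApproxSplit T x s lam ε A) {φ : σ → ℝ}
  (hT : IsNarrow μ pe T) (hx : x =ᵐ[μ] φ ∘ s) {δ : ℝ} (hδ : 0 < δ)
include h hT hx hδ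

theorem exists_half : ∃ E, IsApproxSplit T x s (lam / 2) (ε / 2 + δ) E := by
  obtain ⟨hA, hfib, hTA⟩ := h
  obtain ⟨E, -, hE, hfibE, hTE⟩ := hT.exists_fiberwise_half_subset x s φ hx hA hδ
  refine ⟨E, hE, fun v => by rw [hfibE, hfib]; ring, ?_⟩
  have hsplit : T (lpRestrict x hE) - (lam / 2) • T x =
      (T (lpRestrict x hE) - (2⁻¹ : ℝ) • T (lpRestrict x hA)) +
        (2⁻¹ : ℝ) • (T (lpRestrict x hA) - lam • T x) := by
    module
  rw [hsplit]
  exact norm_add_inv_two_smul_lt hTE hTA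

theorem exists_half_add : ∃ E, IsApproxSplit T x s ((1 + lam) / 2) (ε / 2 + δ) E := by
  obtain ⟨hA, hfib, hTA⟩ := h
  obtain ⟨E, hEA, hE, hfibE, hTE⟩ := hT.exists_fiberwise_half_subset x s φ hx hA.compl hδ
  have hAE : Disjoint A E := disjoint_compl_right.mono_right hEA
  refine ⟨A ∪ E, hA.union hE, fun v => ?_, ?_⟩
  · rw [Set.union_inter_distrib_right,
      measureReal_union (hAE.mono Set.inter_subset_left Set.inter_subset_left)
        (hE.inter (s.measurableSet_fiber v)),
      hfibE, measureReal_compl_inter_eq hA (hfib v), hfib]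
    ring
  · have hsplit : T (lpRestrict x (hA.union hE)) - ((1 + lam) / 2) • T x =
        (T (lpRestrict x hE) - (2⁻¹ : ℝ) • T (lpRestrict x hA.compl)) +
          (2⁻¹ : ℝ) • (T (lpRestrict x hA) - lam • T x) := by
      rw [lpRestrict_union x hA hE hAE, lpRestrict_compl x hA, map_add, map_sub]
      module
    rw [hsplit]
    exact norm_add_inv_two_smul_lt hTE hTA

end IsApproxSplit

theorem IsNarrow.exists_isApproxSplit_dyadic [IsFiniteMeasure μ] {σ : Type*}
    {T : Lp ℝ pe μ →L[ℝ] Lp ℝ pe μ} (hT : IsNarrow μ pe T) (x : Lp ℝ pe μ)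
    (s : SimpleFunc Ω σ) (φ : σ → ℝ) (hx : x =ᵐ[μ] φ ∘ s) (n j : ℕ) (hj : j ≤ 2 ^ n)
    {ε : ℝ} (hε : 0 < ε) : ∃ A, IsApproxSplit T x s ((j : ℝ) / 2 ^ n) ε A := by
  induction n generalizing j ε with
  | zero =>
    interval_cases j
    · exact ⟨∅, by simpa using IsApproxSplit.empty hε⟩
    · exact ⟨Set.univ, by simpa using IsApproxSplit.univ hε⟩
  | succ n ih =>
    rw [pow_succ] at hj ⊢
    rcases le_or_gt j (2 ^ n) with hjn | hjn
    · obtain ⟨A, hA⟩ := ih j hjn hε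
      obtain ⟨E, hE⟩ := hA.exists_half hT hx (half_pos hε)
      have hlam : (j : ℝ) / (2 ^ n * 2) = j / 2 ^ n / 2 := by ring
      exact ⟨E, by rwa [hlam, ← add_halves ε]⟩
    · obtain ⟨A, hA⟩ := ih (j - 2 ^ n) (by omega) hε
      obtain ⟨E, hE⟩ := hA.exists_half_add hT hx (half_pos hε)
      have hlam : (j : ℝ) / (2 ^ n * 2) = (1 + ((j - 2 ^ n : ℕ) : ℝ) / 2 ^ n) / 2 := by
        rw [Nat.cast_sub hjn.le]
        field_simp
        push_cast
        ring
      exact ⟨E, by rwa [hlam, ← add_halves ε]⟩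

theorem stmt17_general [IsFiniteMeasure μ]
    (p : ℝ) (hp : 1 ≤ p) (hpe : pe = ENNReal.ofReal p)
    (T : Lp ℝ pe μ →L[ℝ] Lp ℝ pe μ) (hT : IsNarrow μ pe T)
    (x y : Lp ℝ pe μ) (sx sy : SimpleFunc Ω ℝ)
    (hxs : (x : Ω → ℝ) =ᵐ[μ] sx) (hys : (y : Ω → ℝ) =ᵐ[μ] sy)
    (hy : T x = y) (n j : ℕ) (hj2 : j ≤ 2 ^ n - 1)
    (lam : ℝ) (hlam : lam = (j : ℝ) / 2 ^ n)
    (ε : ℝ) (hε : 0 < ε) :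
    ∃ A : Set Ω, ∃ hA : MeasurableSet A,
      ‖lpRestrict x hA‖ ^ p = lam * ‖x‖ ^ p ∧
      ‖lpRestrict y hA.compl‖ ^ p = (1 - lam) * ‖y‖ ^ p ∧
      ‖T (lpRestrict x hA) - lam • y‖ < ε := by
  have hpe_top : pe ≠ ⊤ := hpe ▸ ENNReal.ofReal_ne_top
  obtain rfl : pe.toReal = p := by rw [hpe, ENNReal.toReal_ofReal (by linarith)]
  subst hlam
  obtain ⟨A, hA, hfib, hTA⟩ := hT.exists_isApproxSplit_dyadic x (sx.pair sy) Prod.fst hxs n j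
    (hj2.trans (Nat.sub_le _ _)) hε
  exact ⟨A, hA, norm_lpRestrict_rpow_eq_mul x hpe_top (sx.pair sy) Prod.fst hxs hA hfib,
    norm_lpRestrict_rpow_eq_mul y hpe_top (sx.pair sy) Prod.snd hys hA.compl
      fun v => measureReal_compl_inter_eq hA (hfib v), hy ▸ hTA⟩

/-- For a narrow `T` on `L_p(μ)` over an atomless finite measure, simple `x, y` with
`Tx = y`, each dyadic `λ = j/2^n` (`1 ≤ j ≤ 2^n - 1`) and `ε > 0`, there is a partition
`Ω = A ⊔ Aᶜ` with `‖x1_A‖^p = λ‖x‖^p`, `‖y1_{Aᶜ}‖^p = (1-λ)‖y‖^p` and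
`‖T(x1_A) - λ y‖ < ε`. -/
theorem stmt17 [IsFiniteMeasure μ]
    (hμ : ∀ A : Set Ω, MeasurableSet A → 0 < μ A →
      ∃ B ⊆ A, MeasurableSet B ∧ 0 < μ B ∧ μ B < μ A)
    (p : ℝ) (hp : 1 ≤ p) (hpe : pe = ENNReal.ofReal p)
    (T : Lp ℝ pe μ →L[ℝ] Lp ℝ pe μ) (hT : IsNarrow μ pe T)
    (x y : Lp ℝ pe μ) (sx sy : SimpleFunc Ω ℝ)
    (hxs : (x : Ω → ℝ) =ᵐ[μ] sx) (hys : (y : Ω → ℝ) =ᵐ[μ] sy)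
    (hy : T x = y) (n j : ℕ) (hj1 : 1 ≤ j) (hj2 : j ≤ 2 ^ n - 1)
    (lam : ℝ) (hlam : lam = (j : ℝ) / 2 ^ n)
    (ε : ℝ) (hε : 0 < ε) :
    ∃ A : Set Ω, ∃ hA : MeasurableSet A,
      ‖lpRestrict x hA‖ ^ p = lam * ‖x‖ ^ p ∧
      ‖lpRestrict y hA.compl‖ ^ p = (1 - lam) * ‖y‖ ^ p ∧
      ‖T (lpRestrict x hA) - lam • y‖ < ε :=
  stmt17_general p hp hpe T hT x y sx sy hxs hys hy n j hj2 lam hlam ε hε
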